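/- arXiv:2109.13048 — 4 statements merged into one kernel-verified Lean document; each statement's English description precedes it below -/
import Mathlib

section
/- Let T be a tree quiver and θ ∈ ℝ^{T₀} a stability vector with Σ_{v∈T₀} θ_v = 0, written as θ = Σ_{α∈T₁} c_α e_α in the basis (e_α)_{α∈T₁} of the hyperplane H. Then the following are equivalent: (i) for every nonempty proper successor-closed subset S ⊊ T₀ one has Σ_{v∈S} θ_v < 0 (i.e., the abelian representation 𝕀 of T is θ-stable); (ii) c_α < 0 for every arrow α ∈ T₁ (i.e., T is θ-regular). -/
open SimpleGraph

/-- A connected simple graph whose edges are covered by a finite index type `B`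
has at most `card B + 1` vertices. -/
lemma conn_card_le {V B : Type*} [Fintype V] [Fintype B] [DecidableEq V]
    (ends : B → V × V) (G : SimpleGraph V)
    (hG : ∀ x y, G.Adj x y → ∃ β : B, ends β = (x, y) ∨ ends β = (y, x))
    (hconn : G.Connected) : Fintype.card V ≤ Fintype.card B + 1 := by
  classical
  obtain ⟨r⟩ := hconn.nonempty
  have key : ∀ v : V, v ≠ r → ∃ β : B, ∃ u : V,
      (ends β = (v, u) ∨ ends β = (u, v)) ∧ G.dist u r < G.dist v r := by
    intro v hv
    have hreach : G.Reachable v r := hconn v r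
    obtain ⟨p, hp⟩ := hreach.exists_walk_length_eq_dist
    have hpos : 0 < G.dist v r := hconn.pos_dist_of_ne hv
    cases p with
    | nil => exact absurd rfl hv
    | @cons _ u _ hadj q =>
      obtain ⟨β, hβ⟩ := hG v u hadj
      have hq : G.dist u r ≤ q.length := SimpleGraph.dist_le q
      rw [SimpleGraph.Walk.length_cons] at hp
      exact ⟨β, u, hβ, by omega⟩
  choose f u hf hd using key
  have hinj : Function.Injective (fun v : {v : V // v ≠ r} => f v.1 v.2) := by
    rintro ⟨v₁, h₁⟩ ⟨v₂, h₂⟩ hfe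
    simp only at hfe
    refine Subtype.ext ?_
    by_contra hne'
    have e1 := hf v₁ h₁
    have e2 := hf v₂ h₂
    rw [hfe] at e1
    have hd1 := hd v₁ h₁
    have hd2 := hd v₂ h₂
    rcases e1 with e1 | e1 <;> rcases e2 with e2 | e2 <;> rw [e2] at e1 <;>
      injection e1 with ea eb
    · exact hne' ea.symm
    · rw [ea, eb] at hd2; omega
    · rw [eb, ea] at hd2; omega
    · exact hne' eb.symm
  have hle := Fintype.card_le_of_injective _ hinj
  have hcv : Fintype.card {v : V // v ≠ r} = Fintype.card V - 1 := by
    simp [Fintype.card_subtype_compl]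
  have hpos : 0 < Fintype.card V := Fintype.card_pos_iff.mpr ⟨r⟩
  omega

/-- Let `T` be a tree quiver and `θ` a stability vector with
`∑_v θ_v = 0`, written `θ = ∑_{α∈T₁} c_α e_α`. Then the abelian representation `𝕀`
of `T` is `θ`-stable (every nonempty proper successor-closed subset `S ⊊ T₀`
satisfies `∑_{v∈S} θ_v < 0`) if and only if `T` is `θ`-regular (`c_α < 0` for
every arrow `α`). -/
theorem stmt10 {V A : Type*} [Fintype V] [Fintype A] [Nonempty V] [DecidableEq V]
    (h t : A → V)
    (hconn : ∀ v w : V, Relation.ReflTransGen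
      (fun x y => ∃ α : A, (t α = x ∧ h α = y) ∨ (t α = y ∧ h α = x)) v w)
    (hcard : Fintype.card A = Fintype.card V - 1)
    (θ : V → ℝ) (hsum : ∑ v : V, θ v = 0)
    (c : A → ℝ)
    (hθ : θ = ∑ α : A, c α • (Pi.single (h α) 1 - Pi.single (t α) 1 : V → ℝ)) :
    (∀ S : Finset V, S.Nonempty → S ≠ Finset.univ →
        (∀ α : A, t α ∈ S → h α ∈ S) → ∑ v ∈ S, θ v < 0)
      ↔ ∀ α : A, c α < 0 := by
  classical
  -- The weight of any subset, expressed in the coefficients c.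
  have hθS : ∀ S : Finset V, ∑ v ∈ S, θ v =
      ∑ α : A, c α * ((if h α ∈ S then (1:ℝ) else 0) - (if t α ∈ S then (1:ℝ) else 0)) := by
    intro S
    rw [hθ]
    simp only [Finset.sum_apply, Pi.smul_apply, Pi.sub_apply, smul_eq_mul]
    rw [Finset.sum_comm]
    refine Finset.sum_congr rfl fun α _ => ?_
    rw [← Finset.mul_sum, Finset.sum_sub_distrib]
    congr 2
    · simp [Pi.single_apply, Finset.sum_ite_eq' S (h α) (fun _ => (1:ℝ))]
    · simp [Pi.single_apply, Finset.sum_ite_eq' S (t α) (fun _ => (1:ℝ))]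
  constructor
  · -- stability → regularity
    intro hstab α₀
    set G₀ : SimpleGraph V := SimpleGraph.fromRel
      (fun x y => ∃ β : A, β ≠ α₀ ∧ ((t β = x ∧ h β = y) ∨ (t β = y ∧ h β = x))) with hG₀
    set S : Finset V := Finset.univ.filter (fun v => G₀.Reachable (h α₀) v) with hS
    have hmemS : ∀ v, v ∈ S ↔ G₀.Reachable (h α₀) v := by
      intro v; simp [hS]
    have hhS : h α₀ ∈ S := (hmemS _).mpr (Reachable.refl _)
    -- t α₀ is not reachable from h α₀ avoiding α₀, by edge counting
    have htS : t α₀ ∉ S := by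
      intro hmem
      have hr : G₀.Reachable (h α₀) (t α₀) := (hmemS _).mp hmem
      -- one step of the full relation is realized in G₀
      have hstep : ∀ x y : V, (∃ α : A, (t α = x ∧ h α = y) ∨ (t α = y ∧ h α = x)) →
          G₀.Reachable x y := by
        rintro x y ⟨α, hα⟩
        by_cases hxy : x = y
        · exact hxy ▸ Reachable.refl x
        by_cases hαα : α = α₀
        · subst hαα
          rcases hα with ⟨hx, hy⟩ | ⟨hx, hy⟩
          · rw [← hx, ← hy]; exact hr.symm
          · rw [← hx, ← hy]; exact hr
        · refine Adj.reachable ?_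
          rw [hG₀, SimpleGraph.fromRel_adj]
          exact ⟨hxy, Or.inl ⟨α, hαα, hα⟩⟩
      have hGconn : G₀.Connected := by
        rw [SimpleGraph.connected_iff]
        refine ⟨fun v w => ?_, ‹Nonempty V›⟩
        induction hconn v w with
        | refl => exact Reachable.refl _
        | tail _ step ih => exact ih.trans (hstep _ _ step)
      have hcount := conn_card_le (B := {β : A // β ≠ α₀})
        (fun β => (t β.1, h β.1)) G₀ ?_ hGconn
      · have hcA : Fintype.card {β : A // β ≠ α₀} = Fintype.card A - 1 := by
          simp [Fintype.card_subtype_compl]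
        have hApos : 0 < Fintype.card V := Fintype.card_pos
        have hA1 : 0 < Fintype.card A := by
          by_contra hA0
          have : Fintype.card A = 0 := by omega
          -- then card V ≤ 1 is fine, but we need a contradiction from t α₀ existing
          have : IsEmpty A := Fintype.card_eq_zero_iff.mp this
          exact this.elim α₀
        omega
      · intro x y hxy
        rw [hG₀, SimpleGraph.fromRel_adj] at hxy
        obtain ⟨hne, hrel⟩ := hxy
        rcases hrel with ⟨β, hβ, hor⟩ | ⟨β, hβ, hor⟩ <;>
          [rcases hor with ⟨h1, h2⟩ | ⟨h1, h2⟩; rcases hor with ⟨h1, h2⟩ | ⟨h1, h2⟩]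
        · exact ⟨⟨β, hβ⟩, Or.inl (by simp [h1, h2])⟩
        · exact ⟨⟨β, hβ⟩, Or.inr (by simp [h1, h2])⟩
        · exact ⟨⟨β, hβ⟩, Or.inr (by simp [h1, h2])⟩
        · exact ⟨⟨β, hβ⟩, Or.inl (by simp [h1, h2])⟩
    -- S is successor-closed
    have hsucc : ∀ α : A, t α ∈ S → h α ∈ S := by
      intro α hα
      by_cases hαα : α = α₀
      · exact absurd (hαα ▸ hα) htS
      by_cases hth : t α = h α
      · exact hth ▸ hα
      have hadj : G₀.Adj (t α) (h α) := by
        rw [hG₀, SimpleGraph.fromRel_adj]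
        exact ⟨hth, Or.inl ⟨α, hαα, Or.inl ⟨rfl, rfl⟩⟩⟩
      exact (hmemS _).mpr (((hmemS _).mp hα).trans hadj.reachable)
    -- the weight of S is exactly c α₀
    have hweight : ∑ v ∈ S, θ v = c α₀ := by
      rw [hθS S]
      rw [Finset.sum_eq_single α₀]
      · simp [hhS, htS]
      · intro β _ hβ
        have hiff : (h β ∈ S ↔ t β ∈ S) := by
          by_cases hth : t β = h β
          · rw [hth]
          have hadj : G₀.Adj (t β) (h β) := by
            rw [hG₀, SimpleGraph.fromRel_adj]
            exact ⟨hth, Or.inl ⟨β, hβ, Or.inl ⟨rfl, rfl⟩⟩⟩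
          constructor
          · intro hmem
            exact (hmemS _).mpr (((hmemS _).mp hmem).trans hadj.reachable.symm)
          · intro hmem
            exact (hmemS _).mpr (((hmemS _).mp hmem).trans hadj.reachable)
        by_cases hmem : t β ∈ S
        · simp [hmem, hiff.mpr hmem]
        · have hh : h β ∉ S := fun hh => hmem (hiff.mp hh)
          simp [hmem, hh]
      · intro habs; exact absurd (Finset.mem_univ α₀) habs
    have := hstab S ⟨h α₀, hhS⟩ (fun he => htS (he ▸ Finset.mem_univ _)) hsucc
    rwa [hweight] at this
  · -- regularity → stability
    intro hreg S hne hproper hsucc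
    rw [hθS S]
    -- there is a boundary arrow entering S
    have hbd : ∃ α : A, h α ∈ S ∧ t α ∉ S := by
      by_contra hno
      push_neg at hno
      obtain ⟨v, hv⟩ := hne
      obtain ⟨w, hw⟩ : ∃ w, w ∉ S := by
        by_contra hall
        push_neg at hall
        exact hproper (Finset.eq_univ_iff_forall.mpr hall)
      have hmem : ∀ {x y : V}, Relation.ReflTransGen
          (fun x y => ∃ α : A, (t α = x ∧ h α = y) ∨ (t α = y ∧ h α = x)) x y →
          x ∈ S → y ∈ S := by
        intro x y hxy
        induction hxy with
        | refl => exact id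
        | tail _ step ih =>
          intro hx
          have hb := ih hx
          obtain ⟨α, hα⟩ := step
          rcases hα with ⟨h1, h2⟩ | ⟨h1, h2⟩
          · exact h2 ▸ hsucc α (h1 ▸ hb)
          · exact h1 ▸ hno α (h2 ▸ hb)
      exact hw (hmem (hconn v w) hv)
    obtain ⟨α₀, hα₀h, hα₀t⟩ := hbd
    have hlt : ∀ α ∈ Finset.univ,
        c α * ((if h α ∈ S then (1:ℝ) else 0) - (if t α ∈ S then (1:ℝ) else 0)) ≤ 0 := by
      intro α _
      by_cases hts : t α ∈ S
      · simp [hts, hsucc α hts]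
      · by_cases hhs : h α ∈ S
        · simp only [hhs, hts, if_true, if_false, sub_zero, mul_one]
          exact le_of_lt (hreg α)
        · simp [hts, hhs]
    have hstrict : c α₀ * ((if h α₀ ∈ S then (1:ℝ) else 0) - (if t α₀ ∈ S then (1:ℝ) else 0)) < 0 := by
      simp only [hα₀h, hα₀t, if_true, if_false, sub_zero, mul_one]
      exact hreg α₀
    calc ∑ α : A, c α * ((if h α ∈ S then (1:ℝ) else 0) - (if t α ∈ S then (1:ℝ) else 0))
        < ∑ _α : A, (0:ℝ) :=
          Finset.sum_lt_sum hlt ⟨α₀, Finset.mem_univ α₀, hstrict⟩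
      _ = 0 := by simp
end

section
/- Let Q₀ be a finite set, d : Q₀ → ℤ_{>0}, and θ : Q₀ → ℝ with Σ_v d_v θ_v = 0. Assume d is θ-coprime: for every e : Q₀ → ℤ with 0 ≤ e_v ≤ d_v for all v, e ≠ 0 and e ≠ d, one has Σ_v e_v θ_v ≠ 0. Let J := {(v,i) : v ∈ Q₀, 1 ≤ i ≤ d_v} and define θ̃ ∈ ℝ^J by θ̃_{(v,i)} := θ_v (so θ̃ lies in the hyperplane H_J := {x ∈ ℝ^J : Σ_{j∈J} x_j = 0}). Then for every basis B of H_J consisting of difference vectors e_j − e_{j'} with j ≠ j' ∈ J, all the coordinates of θ̃ with respect to B are nonzero. -/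
/-- Let `d : Q₀ → ℤ_{>0}` and `θ : Q₀ → ℝ` with `∑ d_v θ_v = 0`, and
assume `d` is `θ`-coprime. Let `J = {(v,i) : 1 ≤ i ≤ d_v}` and `θ̃_{(v,i)} = θ_v`,
an element of the hyperplane `H_J = {x : ∑ x_j = 0}`. Then for every basis of
`H_J` consisting of difference vectors `e_j − e_{j'}` (`j ≠ j'`), all coordinates
of `θ̃` with respect to this basis are nonzero. -/
theorem stmt11 {Q : Type*} [Fintype Q] [DecidableEq Q]
    (d : Q → ℕ) (hd : ∀ v, 0 < d v)
    (θ : Q → ℝ) (hsum : ∑ v : Q, (d v : ℝ) * θ v = 0)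
    (hcop : ∀ e : Q → ℕ, (∀ v, e v ≤ d v) → e ≠ 0 → e ≠ d →
      ∑ v : Q, (e v : ℝ) * θ v ≠ 0)
    {ι : Type*} [Fintype ι]
    (κ : ι → ((Σ v : Q, Fin (d v)) → ℝ))
    (hκdiff : ∀ i, ∃ j j' : (Σ v : Q, Fin (d v)), j ≠ j' ∧
      κ i = Pi.single j 1 - Pi.single j' 1)
    (hind : LinearIndependent ℝ κ)
    (hspan : Submodule.span ℝ (Set.range κ)
      = LinearMap.ker (∑ j : (Σ v : Q, Fin (d v)),
          (LinearMap.proj j : ((Σ v : Q, Fin (d v)) → ℝ) →ₗ[ℝ] ℝ)))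
    (tc : ι → ℝ)
    (hrep : (fun j : (Σ v : Q, Fin (d v)) => θ j.1) = ∑ i : ι, tc i • κ i) :
    ∀ i, tc i ≠ 0 := by
  classical
  intro i₀ htc
  choose A B hAB hκ using hκdiff
  let r : (Σ v : Q, Fin (d v)) → (Σ v : Q, Fin (d v)) → Prop := fun j j' =>
    ∃ i, i ≠ i₀ ∧ ((A i = j ∧ B i = j') ∨ (A i = j' ∧ B i = j))
  let S : (Σ v : Q, Fin (d v)) → Prop := fun j => Relation.EqvGen r (A i₀) j
  -- membership in span lemma
  have hmemspan : ∀ j j' : (Σ v : Q, Fin (d v)), Relation.EqvGen r j j' →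
      (Pi.single j 1 - Pi.single j' 1 : (Σ v : Q, Fin (d v)) → ℝ) ∈ Submodule.span ℝ (κ '' {i₀}ᶜ) := by
    intro j j' h
    induction h with
    | rel x y hxy =>
      obtain ⟨i, hi, hc⟩ := hxy
      have hk : κ i ∈ Submodule.span ℝ (κ '' {i₀}ᶜ) :=
        Submodule.subset_span ⟨i, hi, rfl⟩
      rcases hc with ⟨h1, h2⟩ | ⟨h1, h2⟩
      · rw [← h1, ← h2, ← hκ i]; exact hk
      · have heq : (Pi.single x 1 - Pi.single y 1 : (Σ v : Q, Fin (d v)) → ℝ) = -(κ i) := by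
          rw [hκ i, h1, h2, neg_sub]
        rw [heq]; exact Submodule.neg_mem _ hk
    | refl x => simpa using Submodule.zero_mem (Submodule.span ℝ (κ '' {i₀}ᶜ))
    | symm x y _ ih =>
      have heq : (Pi.single y 1 - Pi.single x 1 : (Σ v : Q, Fin (d v)) → ℝ)
          = -(Pi.single x 1 - Pi.single y 1) := (neg_sub _ _).symm
      rw [heq]; exact Submodule.neg_mem _ ih
    | trans x y z _ _ ih1 ih2 =>
      have heq : (Pi.single x 1 - Pi.single z 1 : (Σ v : Q, Fin (d v)) → ℝ)
          = (Pi.single x 1 - Pi.single y 1) + (Pi.single y 1 - Pi.single z 1) :=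
        (sub_add_sub_cancel _ _ _).symm
      rw [heq]; exact Submodule.add_mem _ ih1 ih2
  have hb : ¬ S (B i₀) := by
    intro hS
    have hk : κ i₀ ∈ Submodule.span ℝ (κ '' {i₀}ᶜ) := by
      rw [hκ i₀]; exact hmemspan _ _ hS
    exact hind.notMem_span_image (by simp) hk
  let χ : (Σ v : Q, Fin (d v)) → ℝ := fun j => if S j then 1 else 0
  have hsingle : ∀ c : (Σ v : Q, Fin (d v)), ∑ j : (Σ v : Q, Fin (d v)), χ j * (Pi.single c 1 : (Σ v : Q, Fin (d v)) → ℝ) j = χ c := by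
    intro c
    simp [Pi.single_apply, mul_ite]
  have hχκ : ∀ i, i ≠ i₀ → ∑ j : (Σ v : Q, Fin (d v)), χ j * κ i j = 0 := by
    intro i hi
    have hrel : Relation.EqvGen r (A i) (B i) :=
      Relation.EqvGen.rel _ _ ⟨i, hi, Or.inl ⟨rfl, rfl⟩⟩
    have hiff : S (A i) ↔ S (B i) :=
      ⟨fun h => h.trans _ _ _ hrel, fun h => h.trans _ _ _ (hrel.symm _ _)⟩
    have hχeq : χ (A i) = χ (B i) := by
      simp only [χ]
      exact if_congr hiff rfl rfl
    calc ∑ j : (Σ v : Q, Fin (d v)), χ j * κ i j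
        = ∑ j : (Σ v : Q, Fin (d v)), (χ j * (Pi.single (A i) 1 : (Σ v : Q, Fin (d v)) → ℝ) j - χ j * (Pi.single (B i) 1 : (Σ v : Q, Fin (d v)) → ℝ) j) := by
          rw [hκ i]; simp [mul_sub]
      _ = χ (A i) - χ (B i) := by
          rw [Finset.sum_sub_distrib, hsingle, hsingle]
      _ = 0 := by rw [hχeq, sub_self]
  have hθapp : ∀ j : (Σ v : Q, Fin (d v)), θ j.1 = ∑ i, tc i * κ i j := by
    intro j
    have h := congrFun hrep j
    simp only [Finset.sum_apply, Pi.smul_apply, smul_eq_mul] at h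
    exact h
  have hmain : ∑ j : (Σ v : Q, Fin (d v)), χ j * θ j.1 = 0 := by
    calc ∑ j : (Σ v : Q, Fin (d v)), χ j * θ j.1 = ∑ j : (Σ v : Q, Fin (d v)), ∑ i, χ j * (tc i * κ i j) := by
          simp_rw [hθapp, Finset.mul_sum]
      _ = ∑ i, ∑ j : (Σ v : Q, Fin (d v)), χ j * (tc i * κ i j) := Finset.sum_comm
      _ = ∑ i, tc i * ∑ j : (Σ v : Q, Fin (d v)), χ j * κ i j := by
          refine Finset.sum_congr rfl fun i _ => ?_
          rw [Finset.mul_sum]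
          refine Finset.sum_congr rfl fun j _ => ?_
          ring
      _ = 0 := by
          refine Finset.sum_eq_zero fun i _ => ?_
          by_cases h : i = i₀
          · subst h; rw [htc]; ring
          · rw [hχκ i h]; ring
  let e : Q → ℕ := fun v => (Finset.univ.filter (fun i : Fin (d v) => S ⟨v, i⟩)).card
  have hsum_e : ∑ v, (e v : ℝ) * θ v = ∑ j : (Σ v : Q, Fin (d v)), χ j * θ j.1 := by
    conv_rhs => rw [← Finset.univ_sigma_univ, Finset.sum_sigma]
    refine Finset.sum_congr rfl fun v _ => ?_
    have : ∑ i : Fin (d v), χ ⟨v, i⟩ * θ v = (∑ i : Fin (d v), χ ⟨v, i⟩) * θ v := by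
      rw [Finset.sum_mul]
    rw [this]
    congr 1
    simp only [χ, Finset.sum_boole]
    rfl
  have he_le : ∀ v, e v ≤ d v := fun v =>
    le_trans (Finset.card_filter_le _ _) (by simp)
  have he0 : e ≠ 0 := by
    intro h
    have h1 : S (A i₀) := Relation.EqvGen.refl _
    have hmem : (A i₀).2 ∈
        Finset.univ.filter (fun i : Fin (d (A i₀).1) => S ⟨(A i₀).1, i⟩) := by
      simp only [Finset.mem_filter, Finset.mem_univ, true_and, Sigma.eta]
      exact h1
    have hc := Finset.card_pos.mpr ⟨_, hmem⟩
    exact (Nat.pos_iff_ne_zero.mp hc) (congrFun h (A i₀).1)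
  have hed : e ≠ d := by
    intro h
    apply hb
    have hv := congrFun h (B i₀).1
    have huniv : Finset.univ.filter (fun i : Fin (d (B i₀).1) => S ⟨(B i₀).1, i⟩)
        = Finset.univ := by
      apply Finset.eq_univ_of_card
      rw [Fintype.card_fin]
      exact hv
    have hmem : (B i₀).2 ∈
        Finset.univ.filter (fun i : Fin (d (B i₀).1) => S ⟨(B i₀).1, i⟩) := by
      rw [huniv]; exact Finset.mem_univ _
    have := (Finset.mem_filter.mp hmem).2
    simpa only [Sigma.eta] using this
  exact hcop e he_le he0 hed (hsum_e.trans hmain)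
end

section
/- Let T be a tree quiver and ζ ∈ ℝ^{T₀} with Σ_{v∈T₀} ζ_v = 0, written as ζ = Σ_{α∈T₁} c_α e_α; assume ζ is regular, i.e., c_α ≠ 0 for every α ∈ T₁. Let R : T₁ → ℂ be a representation of dimension vector 𝕀. Call a subset S ⊆ T₀ R-invariant if for every arrow α with R_α ≠ 0 and t(α) ∈ S, also h(α) ∈ S; call R ζ-semistable if Σ_{v∈S} ζ_v ≤ 0 for every nonempty proper R-invariant subset S ⊊ T₀, and ζ-stable if all these inequalities are strict. Then every ζ-semistable representation R of T of dimension vector 𝕀 is ζ-stable. -/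
open Finset Submodule

private lemma stmt12_cross {V : Type*} {r : V → V → Prop} {S : Finset V} {v w : V}
    (hpath : Relation.ReflTransGen r v w) :
    v ∈ S → w ∉ S → ∃ x y, r x y ∧ x ∈ S ∧ y ∉ S := by
  induction hpath with
  | refl => intro hv hw; exact absurd hv hw
  | @tail b cc _ hstep ih =>
    intro hv hw
    by_cases hb : b ∈ S
    · exact ⟨b, cc, hstep, hb, hw⟩
    · exact ih hv hb

private lemma stmt12_path_span {V A : Type*} [DecidableEq V] (h t : A → V) (P : A → Prop)
    {v w : V}
    (hpath : Relation.ReflTransGen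
      (fun x y => ∃ α : A, P α ∧ ((t α = x ∧ h α = y) ∨ (t α = y ∧ h α = x))) v w) :
    (Pi.single v 1 - Pi.single w 1 : V → ℝ) ∈
      Submodule.span ℝ
        ((fun β => (Pi.single (h β) 1 - Pi.single (t β) 1 : V → ℝ)) '' {β | P β}) := by
  induction hpath with
  | refl => simp
  | @tail b cc _ hstep ih =>
    obtain ⟨γ, hγP, hcase⟩ := hstep
    have hmem : (Pi.single (h γ) 1 - Pi.single (t γ) 1 : V → ℝ) ∈
        Submodule.span ℝ
          ((fun β => (Pi.single (h β) 1 - Pi.single (t β) 1 : V → ℝ)) '' {β | P β}) :=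
      Submodule.subset_span ⟨γ, hγP, rfl⟩
    rcases hcase with ⟨h1, h2⟩ | ⟨h1, h2⟩
    · have heq : (Pi.single v 1 - Pi.single cc 1 : V → ℝ)
          = (Pi.single v 1 - Pi.single b 1) - (Pi.single (h γ) 1 - Pi.single (t γ) 1) := by
        rw [h1, h2]; abel
      rw [heq]; exact sub_mem ih hmem
    · have heq : (Pi.single v 1 - Pi.single cc 1 : V → ℝ)
          = (Pi.single v 1 - Pi.single b 1) + (Pi.single (h γ) 1 - Pi.single (t γ) 1) := by
        rw [h1, h2]; abel
      rw [heq]; exact add_mem ih hmem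

/-- Let `T` be a tree quiver and `ζ` with `∑_v ζ_v = 0`, written
`ζ = ∑_{α∈T₁} c_α e_α` with all `c_α ≠ 0` (regularity). Let `R : T₁ → ℂ` be a
representation of dimension vector `𝕀`. If `R` is `ζ`-semistable (every nonempty
proper `R`-invariant subset `S ⊊ T₀` has `∑_{v∈S} ζ_v ≤ 0`), then `R` is
`ζ`-stable (all these inequalities are strict). -/
theorem stmt12 {V A : Type*} [Fintype V] [Fintype A] [Nonempty V] [DecidableEq V]
    (h t : A → V)
    (hconn : ∀ v w : V, Relation.ReflTransGen
      (fun x y => ∃ α : A, (t α = x ∧ h α = y) ∨ (t α = y ∧ h α = x)) v w)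
    (hcard : Fintype.card A = Fintype.card V - 1)
    (ζ : V → ℝ) (hsum : ∑ v : V, ζ v = 0)
    (c : A → ℝ)
    (hζ : ζ = ∑ α : A, c α • (Pi.single (h α) 1 - Pi.single (t α) 1 : V → ℝ))
    (hreg : ∀ α : A, c α ≠ 0)
    (R : A → ℂ)
    (hss : ∀ S : Finset V, S.Nonempty → S ≠ Finset.univ →
      (∀ α : A, R α ≠ 0 → t α ∈ S → h α ∈ S) → ∑ v ∈ S, ζ v ≤ 0) :
    ∀ S : Finset V, S.Nonempty → S ≠ Finset.univ →
      (∀ α : A, R α ≠ 0 → t α ∈ S → h α ∈ S) → ∑ v ∈ S, ζ v < 0 := by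
  classical
  intro S hSne hSuniv hSinv
  set f : A → (V → ℝ) := fun β => (Pi.single (h β) 1 - Pi.single (t β) 1 : V → ℝ) with hfdef
  -- pointwise formula for ζ
  have hζv : ∀ v : V, ζ v = ∑ β : A, c β * f β v := by
    intro v
    rw [hζ]
    simp [Finset.sum_apply, f]
  -- sum of ζ over any finset
  have hsumFor : ∀ U : Finset V, ∑ v ∈ U, ζ v
      = ∑ β : A, c β * ((if h β ∈ U then (1 : ℝ) else 0) - (if t β ∈ U then (1 : ℝ) else 0)) := by
    intro U
    calc ∑ v ∈ U, ζ v = ∑ v ∈ U, ∑ β : A, c β * f β v := by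
          exact Finset.sum_congr rfl fun v _ => hζv v
      _ = ∑ β : A, ∑ v ∈ U, c β * f β v := Finset.sum_comm
      _ = _ := by
          refine Finset.sum_congr rfl fun β _ => ?_
          rw [← Finset.mul_sum]
          congr 1
          simp only [f, Pi.sub_apply, Pi.single_apply, Finset.sum_sub_distrib]
          rw [Finset.sum_ite_eq' U (h β) (fun _ => (1 : ℝ)),
            Finset.sum_ite_eq' U (t β) (fun _ => (1 : ℝ))]
  -- semistability for all invariant sets (including empty, univ)
  have semi : ∀ U : Finset V, (∀ β : A, R β ≠ 0 → t β ∈ U → h β ∈ U) → ∑ v ∈ U, ζ v ≤ 0 := by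
    intro U hU
    rcases U.eq_empty_or_nonempty with rfl | hUne
    · simp
    by_cases hUuniv : U = Finset.univ
    · subst hUuniv; rw [hsum]
    · exact hss U hUne hUuniv hU
  -- linear independence of the family f
  have hpairs : ∀ v w : V, (Pi.single v 1 - Pi.single w 1 : V → ℝ)
      ∈ Submodule.span ℝ (Set.range f) := by
    intro v w
    have hp := stmt12_path_span h t (fun _ => True)
      (Relation.ReflTransGen.mono (r := fun x y => ∃ α : A, (t α = x ∧ h α = y) ∨ (t α = y ∧ h α = x))
        (p := fun x y => ∃ α : A, True ∧ ((t α = x ∧ h α = y) ∨ (t α = y ∧ h α = x)))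
        (fun x y ⟨α, hα⟩ => ⟨α, trivial, hα⟩) v w (hconn v w))
    simpa [f, Set.image_univ] using hp
  have hLI : LinearIndependent ℝ f := by
    rw [linearIndependent_iff_card_eq_finrank_span]
    have hle : (Set.range f).finrank ℝ ≤ Fintype.card A := finrank_range_le_card f
    obtain ⟨v₀⟩ := ‹Nonempty V›
    have htop : (⊤ : Submodule ℝ (V → ℝ))
        ≤ Submodule.span ℝ (Set.range f) ⊔ (ℝ ∙ (Pi.single v₀ 1 : V → ℝ)) := by
      intro g _
      have hg : g = ∑ v : V, Pi.single v (g v) := (Finset.univ_sum_single g).symm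
      rw [hg]
      refine Submodule.sum_mem _ fun v _ => ?_
      have : (Pi.single v (g v) : V → ℝ)
          = g v • ((Pi.single v 1 : V → ℝ) - Pi.single v₀ 1) + g v • (Pi.single v₀ 1 : V → ℝ) := by
        funext u
        simp only [Pi.add_apply, Pi.smul_apply, Pi.sub_apply, Pi.single_apply, smul_eq_mul]
        split <;> ring
      rw [this]
      exact add_mem
        (Submodule.mem_sup_left (Submodule.smul_mem _ _ (hpairs v v₀)))
        (Submodule.mem_sup_right (Submodule.smul_mem _ _ (Submodule.mem_span_singleton_self _)))
    have hVle : Fintype.card V ≤ (Set.range f).finrank ℝ + 1 := by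
      have h1 : Module.finrank ℝ (V → ℝ) = Fintype.card V := Module.finrank_pi ℝ
      have h2 : Module.finrank ℝ (V → ℝ)
          ≤ Module.finrank ℝ ↥(Submodule.span ℝ (Set.range f) ⊔ (ℝ ∙ (Pi.single v₀ 1 : V → ℝ))) := by
        rw [← finrank_top ℝ (V → ℝ)]
        exact Submodule.finrank_mono htop
      have h3 := Submodule.finrank_add_le_finrank_add_finrank
        (Submodule.span ℝ (Set.range f)) (ℝ ∙ (Pi.single v₀ 1 : V → ℝ))
      have hne0 : (Pi.single v₀ 1 : V → ℝ) ≠ 0 := by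
        intro hz
        have := congrFun hz v₀
        simp at this
      have h4 : Module.finrank ℝ ↥(ℝ ∙ (Pi.single v₀ 1 : V → ℝ)) ≤ 1 :=
        le_of_eq (finrank_span_singleton hne0)
      unfold Set.finrank
      omega
    have hVpos : 1 ≤ Fintype.card V := Fintype.card_pos
    omega
  -- find a crossing arrow
  obtain ⟨v, hv⟩ := id hSne
  have : ∃ w : V, w ∉ S := by
    by_contra hcon
    push_neg at hcon
    exact hSuniv (Finset.eq_univ_iff_forall.mpr hcon)
  obtain ⟨w, hw⟩ := this
  obtain ⟨x, y, ⟨α, hcase⟩, hxS, hyS⟩ := stmt12_cross (hconn v w) hv hw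
  have hcross : (t α ∈ S ∧ h α ∉ S) ∨ (h α ∈ S ∧ t α ∉ S) := by
    rcases hcase with ⟨h1, h2⟩ | ⟨h1, h2⟩
    · left; rw [h1, h2]; exact ⟨hxS, hyS⟩
    · right; rw [h1, h2]; exact ⟨hxS, hyS⟩
  -- the cut component K of h α
  set rel' : V → V → Prop :=
    fun x y => ∃ β : A, β ≠ α ∧ ((t β = x ∧ h β = y) ∨ (t β = y ∧ h β = x)) with hrel'
  set K : Finset V := Finset.univ.filter
    (fun u => Relation.ReflTransGen rel' (h α) u) with hKdef
  have hhK : h α ∈ K := Finset.mem_filter.mpr ⟨Finset.mem_univ _, Relation.ReflTransGen.refl⟩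
  have hKclosed : ∀ {x y : V}, x ∈ K → rel' x y → y ∈ K := by
    intro x y hx hxy
    exact Finset.mem_filter.mpr ⟨Finset.mem_univ _, (Finset.mem_filter.mp hx).2.tail hxy⟩
  have hKcut : ∀ β : A, β ≠ α → (h β ∈ K ↔ t β ∈ K) := by
    intro β hβ
    constructor
    · intro hh; exact hKclosed hh ⟨β, hβ, Or.inr ⟨rfl, rfl⟩⟩
    · intro ht; exact hKclosed ht ⟨β, hβ, Or.inl ⟨rfl, rfl⟩⟩
  have htK : t α ∉ K := by
    intro hmem
    have hpath : Relation.ReflTransGen rel' (h α) (t α) := (Finset.mem_filter.mp hmem).2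
    have hsp := stmt12_path_span h t (fun β => β ≠ α) hpath
    have hnot : f α ∉ Submodule.span ℝ (f '' {β | β ≠ α}) :=
      hLI.notMem_span_image (by simp)
    exact hnot (by simpa [f] using hsp)
  -- sum over K is c α
  have hKsum : ∑ v ∈ K, ζ v = c α := by
    rw [hsumFor K]
    rw [Fintype.sum_eq_single α]
    · simp [hhK, htK]
    · intro β hβ
      rcases (hKcut β hβ) with hiff
      by_cases hh : h β ∈ K
      · simp [hh, hiff.mp hh]
      · have hht : t β ∉ K := fun hc => hh (hiff.mpr hc)
        simp [hh, hht]
  have hKcsum : ∑ v ∈ Kᶜ, ζ v = -c α := by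
    have := Finset.sum_add_sum_compl K ζ
    rw [hsum, hKsum] at this
    linarith
  -- from semistability, equality would hold
  by_contra hlt
  have hSle := hss S hSne hSuniv hSinv
  have hS0 : ∑ v ∈ S, ζ v = 0 := le_antisymm hSle (not_lt.mp hlt)
  -- the four invariant sets
  have inv1 : ∀ β : A, R β ≠ 0 → t β ∈ S ∪ K → h β ∈ S ∪ K := by
    intro β hβ htβ
    rcases Finset.mem_union.mp htβ with hts | htk
    · exact Finset.mem_union_left _ (hSinv β hβ hts)
    · by_cases hβα : β = α
      · subst hβα; exact absurd htk htK
      · exact Finset.mem_union_right _ ((hKcut β hβα).mpr htk)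
  have inv2 : ∀ β : A, R β ≠ 0 → t β ∈ S ∩ K → h β ∈ S ∩ K := by
    intro β hβ htβ
    obtain ⟨hts, htk⟩ := Finset.mem_inter.mp htβ
    by_cases hβα : β = α
    · subst hβα; exact absurd htk htK
    · exact Finset.mem_inter.mpr ⟨hSinv β hβ hts, (hKcut β hβα).mpr htk⟩
  have inv3 : ∀ β : A, R β ≠ 0 → t β ∈ S ∪ Kᶜ → h β ∈ S ∪ Kᶜ := by
    intro β hβ htβ
    rcases Finset.mem_union.mp htβ with hts | htk
    · exact Finset.mem_union_left _ (hSinv β hβ hts)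
    · by_cases hβα : β = α
      · subst hβα
        refine Finset.mem_union_left _ ?_
        rcases hcross with ⟨ht, hh⟩ | ⟨hh, _⟩
        · exact hSinv β hβ ht
        · exact hh
      · refine Finset.mem_union_right _ ?_
        rw [Finset.mem_compl] at htk ⊢
        exact fun hc => htk ((hKcut β hβα).mp hc)
  have inv4 : ∀ β : A, R β ≠ 0 → t β ∈ S ∩ Kᶜ → h β ∈ S ∩ Kᶜ := by
    intro β hβ htβ
    obtain ⟨hts, htk⟩ := Finset.mem_inter.mp htβ
    by_cases hβα : β = α
    · subst hβα
      rcases hcross with ⟨_, hh⟩ | ⟨_, ht⟩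
      · exact absurd (hSinv β hβ hts) hh
      · exact absurd hts ht
    · refine Finset.mem_inter.mpr ⟨hSinv β hβ hts, ?_⟩
      rw [Finset.mem_compl] at htk ⊢
      exact fun hc => htk ((hKcut β hβα).mp hc)
  have s1 := semi (S ∪ K) inv1
  have s2 := semi (S ∩ K) inv2
  have s3 := semi (S ∪ Kᶜ) inv3
  have s4 := semi (S ∩ Kᶜ) inv4
  have e1 : ∑ v ∈ S ∪ K, ζ v + ∑ v ∈ S ∩ K, ζ v = ∑ v ∈ S, ζ v + ∑ v ∈ K, ζ v :=
    Finset.sum_union_inter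
  have e2 : ∑ v ∈ S ∪ Kᶜ, ζ v + ∑ v ∈ S ∩ Kᶜ, ζ v = ∑ v ∈ S, ζ v + ∑ v ∈ Kᶜ, ζ v :=
    Finset.sum_union_inter
  apply hreg α
  rw [hS0, hKsum] at e1
  rw [hS0, hKcsum] at e2
  linarith
end

section
/- Let R, r > 0, let f be holomorphic on the punctured disc {z ∈ ℂ : 0 < |z| < R}, and let g be an injective holomorphic function on the disc {w : |w| < r} with g(0) = 0 and g({|w| < r}) ⊆ {|z| < R}. Then for every ε ∈ (0, R) and every ε' ∈ (0, r), the contour integrals over circles centred at 0 satisfy ∮_{|z|=ε} f(z) dz = ∮_{|w|=ε'} f(g(w)) g'(w) dw. In particular, the residue of f at 0 equals the residue of (f∘g)·g' at 0. -/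
open Metric

open Set Complex MeasureTheory Function

local notation "π" => Real.pi

noncomputable def Complex.abs : AbsoluteValue ℂ ℝ := NormedField.toAbsoluteValue ℂ

@[simp] lemma Complex.abs_apply' (z : ℂ) : Complex.abs z = ‖z‖ := rfl

lemma Complex.continuous_abs : Continuous fun z : ℂ => Complex.abs z := continuous_norm

lemma abs_circleMap_zero (R θ : ℝ) : Complex.abs (circleMap 0 R θ) = |R| :=
  norm_circleMap_zero R θ

private lemma circleIntegral_add' {f₁ f₂ : ℂ → ℂ} {c : ℂ} {ρ : ℝ}
    (h₁ : CircleIntegrable f₁ c ρ) (h₂ : CircleIntegrable f₂ c ρ) :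
    (∮ z in C(c, ρ), (f₁ z + f₂ z)) = (∮ z in C(c, ρ), f₁ z) + ∮ z in C(c, ρ), f₂ z := by
  simp only [circleIntegral, smul_add]
  exact intervalIntegral.integral_add h₁.out h₂.out

private lemma circleIntegral_neg' {f : ℂ → ℂ} {c : ℂ} {ρ : ℝ} :
    (∮ z in C(c, ρ), -f z) = -∮ z in C(c, ρ), f z := by
  simp only [circleIntegral, smul_neg]
  exact intervalIntegral.integral_neg

private lemma circleIntegral_zero' {c : ℂ} {ρ : ℝ} :
    (∮ _z in C(c, ρ), (0:ℂ)) = 0 := by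
  simp [circleIntegral]

/-- radius independence for a function holomorphic on a punctured disc -/
private lemma radius_indep {R : ℝ} {f : ℂ → ℂ}
    (hf : DifferentiableOn ℂ f (ball (0:ℂ) R \ {0}))
    {a b : ℝ} (ha : a ∈ Set.Ioo 0 R) (hb : b ∈ Set.Ioo 0 R) :
    (∮ z in C(0, a), f z) = ∮ z in C(0, b), f z := by
  have key : ∀ u v : ℝ, u ∈ Set.Ioo (0:ℝ) R → v ∈ Set.Ioo (0:ℝ) R → u ≤ v →
      (∮ z in C(0, v), f z) = ∮ z in C(0, u), f z := by
    intro u v hu hv huv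
    have hsub : closedBall (0:ℂ) v \ ball 0 u ⊆ ball (0:ℂ) R \ {0} := by
      rintro z ⟨hz1, hz2⟩
      simp only [mem_closedBall, mem_ball, dist_zero_right, mem_diff, mem_singleton_iff] at *
      refine ⟨lt_of_le_of_lt hz1 hv.2, fun h => hz2 ?_⟩
      simpa [h] using hu.1
    have hopen : IsOpen (ball (0:ℂ) R \ {0}) := isOpen_ball.sdiff isClosed_singleton
    refine Complex.circleIntegral_eq_of_differentiable_on_annulus_off_countable hu.1 huv
      countable_empty (hf.continuousOn.mono hsub) fun z hz => ?_
    refine hf.differentiableAt (hopen.mem_nhds ?_)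
    exact hsub ⟨ball_subset_closedBall hz.1.1, fun h => hz.1.2 (ball_subset_closedBall h)⟩
  rcases le_total a b with h | h
  · exact (key a b ha hb h).symm
  · exact key b a hb ha h

/-- a circle integral of a function differentiable on a larger ball vanishes -/
private lemma circle_zero {σ r : ℝ} {h : ℂ → ℂ} (hσ : 0 ≤ σ) (hσr : σ < r)
    (hd : DifferentiableOn ℂ h (ball (0:ℂ) r)) : (∮ w in C(0, σ), h w) = 0 := by
  refine Complex.circleIntegral_eq_zero_of_differentiable_on_off_countable hσ countable_empty
    (hd.continuousOn.mono (closedBall_subset_ball hσr)) fun z hz => ?_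
  exact hd.differentiableAt (isOpen_ball.mem_nhds ((ball_subset_ball hσr.le) hz.1))

private lemma interval_swap {G : ℝ → ℝ → ℂ} (hG : Continuous (uncurry G)) :
    (∫ θ in (0:ℝ)..(2*π), ∫ φ in (0:ℝ)..(2*π), G θ φ)
      = ∫ φ in (0:ℝ)..(2*π), ∫ θ in (0:ℝ)..(2*π), G θ φ := by
  have h2π : (0:ℝ) ≤ 2*π := by positivity
  simp_rw [intervalIntegral.integral_of_le h2π]
  apply MeasureTheory.integral_integral_swap
  have : Integrable (uncurry G) ((volume : Measure (ℝ × ℝ)).restrict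
      (Set.Ioc 0 (2*π) ×ˢ Set.Ioc 0 (2*π))) :=
    (hG.continuousOn.integrableOn_compact (isCompact_Icc.prod isCompact_Icc)).mono_set
      (Set.prod_mono Set.Ioc_subset_Icc_self Set.Ioc_subset_Icc_self)
  rw [Measure.volume_eq_prod] at this
  rwa [Measure.prod_restrict]

private lemma circle_swap {F : ℂ → ℂ → ℂ} {ρ σ : ℝ}
    (hF : Continuous fun p : ℝ × ℝ => F (circleMap 0 ρ p.1) (circleMap 0 σ p.2)) :
    (∮ z in C(0, ρ), ∮ w in C(0, σ), F z w) = ∮ w in C(0, σ), ∮ z in C(0, ρ), F z w := by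
  simp only [circleIntegral, smul_eq_mul, deriv_circleMap]
  have key : ∀ θ : ℝ, circleMap 0 ρ θ * I *
      (∫ φ in (0:ℝ)..(2*π), circleMap 0 σ φ * I * F (circleMap 0 ρ θ) (circleMap 0 σ φ))
      = ∫ φ in (0:ℝ)..(2*π), circleMap 0 ρ θ * I *
        (circleMap 0 σ φ * I * F (circleMap 0 ρ θ) (circleMap 0 σ φ)) := fun θ =>
    (intervalIntegral.integral_const_mul _ _).symm
  simp_rw [key]
  rw [interval_swap (G := fun θ φ => circleMap 0 ρ θ * I *
      (circleMap 0 σ φ * I * F (circleMap 0 ρ θ) (circleMap 0 σ φ)))]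
  · refine intervalIntegral.integral_congr fun φ _ => ?_
    rw [← intervalIntegral.integral_const_mul]
    refine intervalIntegral.integral_congr fun θ _ => ?_
    ring
  · exact (((continuous_circleMap 0 ρ).fst'.mul continuous_const).mul
      (((continuous_circleMap 0 σ).snd'.mul continuous_const).mul hF))

private lemma cauchy_annulus {R : ℝ} {f : ℂ → ℂ}
    (hf : DifferentiableOn ℂ f (ball (0:ℂ) R \ {0}))
    {ρ₁ ρ₂ : ℝ} (h1 : 0 < ρ₁) (h12 : ρ₁ ≤ ρ₂) (h2R : ρ₂ < R) {z : ℂ}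
    (hz1 : ρ₁ < Complex.abs z) (hz2 : Complex.abs z < ρ₂) :
    (2*π*I) * f z = (∮ ζ in C(0, ρ₂), (ζ - z)⁻¹ * f ζ) - ∮ ζ in C(0, ρ₁), (ζ - z)⁻¹ * f ζ := by
  have hopen : IsOpen (ball (0:ℂ) R \ {0}) := isOpen_ball.sdiff isClosed_singleton
  have hA : closedBall (0:ℂ) ρ₂ \ ball 0 ρ₁ ⊆ ball (0:ℂ) R \ {0} := by
    rintro ζ ⟨hζ1, hζ2⟩
    simp only [mem_closedBall, mem_ball, dist_zero_right, mem_diff, mem_singleton_iff,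
      not_lt] at *
    refine ⟨lt_of_le_of_lt hζ1 h2R, fun h => ?_⟩
    rw [h] at hζ2; simp at hζ2; linarith
  have hzmem : z ∈ ball (0:ℂ) R \ {0} := by
    constructor
    · simp only [mem_ball, dist_zero_right]; calc ‖z‖ = Complex.abs z := rfl
        _ < R := lt_trans hz2 h2R
    · simp only [mem_singleton_iff]; intro h; rw [h] at hz1; simp at hz1; linarith
  have hfz : DifferentiableAt ℂ f z := hf.differentiableAt (hopen.mem_nhds hzmem)
  -- continuity of dslope on the annulus
  have hφc : ContinuousOn (dslope f z) (closedBall (0:ℂ) ρ₂ \ ball 0 ρ₁) := by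
    intro ζ hζ
    rcases eq_or_ne ζ z with rfl | hne
    · exact (continuousAt_dslope_same.2 hfz).continuousWithinAt
    · exact ((continuousWithinAt_dslope_of_ne hne).2
        ((hf.continuousOn.mono hA) ζ hζ))
  have hφd : ∀ ζ ∈ (ball (0:ℂ) ρ₂ \ closedBall 0 ρ₁) \ {z}, DifferentiableAt ℂ (dslope f z) ζ := by
    rintro ζ ⟨hζ, hne⟩
    refine (differentiableAt_dslope_of_ne hne).2 (hf.differentiableAt (hopen.mem_nhds ?_))
    exact hA ⟨ball_subset_closedBall hζ.1, fun h => hζ.2 (ball_subset_closedBall h)⟩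
  have heq := Complex.circleIntegral_eq_of_differentiable_on_annulus_off_countable h1 h12
    (countable_singleton z) hφc hφd
  have expand : ∀ ρ : ℝ, 0 < ρ → Complex.abs z ≠ ρ →
      ContinuousOn f (sphere (0:ℂ) ρ) →
      (∮ ζ in C(0, ρ), dslope f z ζ)
        = (∮ ζ in C(0, ρ), (ζ - z)⁻¹ * f ζ) - (∮ ζ in C(0, ρ), (ζ - z)⁻¹) * f z := by
    intro ρ hρ hzρ hfc
    have hzs : ∀ ζ ∈ sphere (0:ℂ) ρ, ζ ≠ z := by
      intro ζ hζ h
      apply hzρ; rw [← h]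
      simpa using mem_sphere_zero_iff_norm.1 hζ
    have hinvc : ContinuousOn (fun ζ : ℂ => (ζ - z)⁻¹) (sphere (0:ℂ) ρ) := by
      refine ContinuousOn.inv₀ (by fun_prop) fun ζ hζ => sub_ne_zero.2 (hzs ζ hζ)
    have hi1 : CircleIntegrable (fun ζ : ℂ => (ζ - z)⁻¹ * f ζ) 0 ρ :=
      (hinvc.mul hfc).circleIntegrable hρ.le
    have hi2 : CircleIntegrable (fun ζ : ℂ => (ζ - z)⁻¹ * f z) 0 ρ :=
      (hinvc.mul continuousOn_const).circleIntegrable hρ.le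
    calc (∮ ζ in C(0, ρ), dslope f z ζ)
        = ∮ ζ in C(0, ρ), ((ζ - z)⁻¹ * f ζ - (ζ - z)⁻¹ * f z) := by
          refine circleIntegral.integral_congr hρ.le fun ζ hζ => ?_
          rw [dslope_of_ne f (hzs ζ hζ), slope_def_field]
          field_simp [sub_ne_zero.2 (hzs ζ hζ)]
      _ = (∮ ζ in C(0, ρ), (ζ - z)⁻¹ * f ζ) - ∮ ζ in C(0, ρ), (ζ - z)⁻¹ * f z :=
          circleIntegral.integral_sub hi1 hi2
      _ = (∮ ζ in C(0, ρ), (ζ - z)⁻¹ * f ζ) - (∮ ζ in C(0, ρ), (ζ - z)⁻¹) * f z := by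
          have hs := circleIntegral.integral_smul_const (fun ζ : ℂ => (ζ - z)⁻¹) (f z) 0 ρ
          simp only [smul_eq_mul] at hs
          rw [hs]
  have hfc2 : ContinuousOn f (sphere (0:ℂ) ρ₂) := by
    refine hf.continuousOn.mono fun ζ hζ => hA ⟨sphere_subset_closedBall hζ, ?_⟩
    simp only [mem_ball, dist_zero_right, not_lt]
    rw [mem_sphere_zero_iff_norm.1 hζ]; linarith
  have hfc1 : ContinuousOn f (sphere (0:ℂ) ρ₁) := by
    refine hf.continuousOn.mono fun ζ hζ => hA ⟨?_, ?_⟩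
    · simp only [mem_closedBall, dist_zero_right]
      rw [mem_sphere_zero_iff_norm.1 hζ]; linarith
    · simp only [mem_ball, dist_zero_right, not_lt]
      rw [mem_sphere_zero_iff_norm.1 hζ]
  have hv2 : (∮ ζ in C(0, ρ₂), (ζ - z)⁻¹) = 2*π*I := by
    refine circleIntegral.integral_sub_inv_of_mem_ball ?_
    simpa [mem_ball, dist_zero_right] using hz2
  have hv1 : (∮ ζ in C(0, ρ₁), (ζ - z)⁻¹) = 0 := by
    have hd : DifferentiableOn ℂ (fun ζ : ℂ => (ζ - z)⁻¹) (ball (0:ℂ) (Complex.abs z)) := by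
      intro ζ hζ
      refine ((differentiableAt_id.sub_const z).inv (sub_ne_zero.2 fun h => ?_)).differentiableWithinAt
      simp only [id_eq] at h
      rw [h] at hζ
      simp [mem_ball, dist_zero_right] at hζ
    exact circle_zero h1.le hz1 hd
  rw [expand ρ₂ (h1.trans_le h12) hz2.ne hfc2, expand ρ₁ h1 hz1.ne' hfc1, hv1, hv2] at heq
  linear_combination -heq

private lemma winding {r σ : ℝ} {g : ℂ → ℂ} (hr : 0 < r) (hσ0 : 0 < σ) (hσr : σ < r)
    (hg : DifferentiableOn ℂ g (ball (0:ℂ) r))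
    (hginj : Set.InjOn g (ball (0:ℂ) r)) (hg0 : g 0 = 0)
    {δ : ℝ} (hδ0 : 0 < δ) (hδ : ∀ w ∈ sphere (0:ℂ) σ, δ ≤ Complex.abs (g w)) :
    ∀ ζ : ℂ, Complex.abs ζ < δ →
      (∮ w in C(0, σ), (g w - ζ)⁻¹ * deriv g w) = 2*π*I := by
  have hsb : sphere (0:ℂ) σ ⊆ ball (0:ℂ) r := fun w hw => by
    simp only [mem_sphere_iff_norm, sub_zero] at hw
    simp [mem_ball, dist_zero_right, hw, hσr]
  have hganal : AnalyticOnNhd ℂ g (ball (0:ℂ) r) := hg.analyticOnNhd isOpen_ball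
  have hg'd : DifferentiableOn ℂ (deriv g) (ball (0:ℂ) r) := hganal.deriv.differentiableOn
  have hgne : ∀ w ∈ sphere (0:ℂ) σ, g w ≠ 0 := by
    intro w hw h
    have := hδ w hw; rw [h] at this; simp at this; linarith
  have hgc : ContinuousOn g (sphere (0:ℂ) σ) := hg.continuousOn.mono hsb
  have hg'c : ContinuousOn (deriv g) (sphere (0:ℂ) σ) := hg'd.continuousOn.mono hsb
  -- Step (a): the log trick
  have logstep : ∀ ζ : ℂ, Complex.abs ζ < δ →
      (∮ w in C(0, σ), (g w - ζ)⁻¹ * deriv g w)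
        = ∮ w in C(0, σ), (g w)⁻¹ * deriv g w := by
    intro ζ hζ
    have hzero : (∮ w in C(0, σ),
        ((g w - ζ)⁻¹ * deriv g w - (g w)⁻¹ * deriv g w)) = 0 := by
      refine circleIntegral.integral_eq_zero_of_hasDerivWithinAt
        (f := fun w => Complex.log (1 - ζ / g w)) hσ0.le fun w hw => ?_
      have hgw : g w ≠ 0 := hgne w hw
      have habs : Complex.abs ζ < Complex.abs (g w) := lt_of_lt_of_le hζ (hδ w hw)
      have hne2 : g w - ζ ≠ 0 := sub_ne_zero.2 fun h => by
        rw [h] at habs; exact lt_irrefl _ habs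
      have hgd : HasDerivAt g (deriv g w) w :=
        (hg.differentiableAt (isOpen_ball.mem_nhds (hsb hw))).hasDerivAt
      have hinner : HasDerivAt (fun u => 1 - ζ / g u)
          (-((0 * g w - ζ * deriv g w) / g w ^ 2)) w :=
        ((hasDerivAt_const w ζ).div hgd hgw).const_sub 1
      have habs2 : Complex.abs (ζ / g w) < 1 := by
        rw [map_div₀]
        exact (div_lt_one (lt_of_le_of_lt (by positivity) habs)).2 habs
      have hslit : 1 - ζ / g w ∈ Complex.slitPlane := by
        refine Complex.mem_slitPlane_iff.2 (Or.inl ?_)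
        have h1 : (ζ / g w).re ≤ Complex.abs (ζ / g w) := Complex.re_le_norm (ζ / g w)
        simp only [Complex.sub_re, Complex.one_re]
        linarith
      have hF := hinner.clog hslit
      refine (hF.congr_deriv ?_).hasDerivWithinAt
      have hne3 : (1:ℂ) - ζ / g w ≠ 0 :=
        sub_ne_zero.2 fun h => hne2 (sub_eq_zero.2 ((div_eq_one_iff_eq hgw).1 h.symm).symm)
      field_simp
      ring
    have hi1 : CircleIntegrable (fun w => (g w - ζ)⁻¹ * deriv g w) 0 σ := by
      refine ((ContinuousOn.inv₀ (hgc.sub continuousOn_const) fun w hw => ?_).mul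
        hg'c).circleIntegrable hσ0.le
      exact sub_ne_zero.2 fun h => by
        have := lt_of_lt_of_le hζ (hδ w hw); rw [h] at this; exact lt_irrefl _ this
    have hi2 : CircleIntegrable (fun w => (g w)⁻¹ * deriv g w) 0 σ :=
      ((ContinuousOn.inv₀ hgc (hgne)).mul hg'c).circleIntegrable hσ0.le
    have := circleIntegral.integral_sub hi1 hi2
    rw [hzero] at this
    linear_combination -this
  -- Step (b): find a point `w₀` near `0` where `deriv g ≠ 0`
  have hnz : ¬ ∀ᶠ w in nhds (0:ℂ), deriv g w = 0 := by
    intro hev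
    have hfreq : ∃ᶠ w in nhdsWithin (0:ℂ) {(0:ℂ)}ᶜ, deriv g w = 0 :=
      (hev.filter_mono nhdsWithin_le_nhds).frequently
    have hzero : EqOn (deriv g) 0 (ball (0:ℂ) r) :=
      hganal.deriv.eqOn_zero_of_preconnected_of_frequently_eq_zero
        (convex_ball (0:ℂ) r).isPreconnected (mem_ball_self hr) hfreq
    have hmem2 : ((r/2 : ℝ) : ℂ) ∈ ball (0:ℂ) r := by
      rw [mem_ball, dist_zero_right]
      simp only [Complex.norm_real, Real.norm_eq_abs]
      rw [abs_of_pos (by linarith)]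
      linarith
    have hconst := (convex_ball (0:ℂ) r).is_const_of_fderivWithin_eq_zero hg
      (fun x hx => by
        have h0 : deriv g x = 0 := hzero hx
        rw [fderivWithin_of_isOpen isOpen_ball hx, ← toSpanSingleton_deriv, h0]
        exact ContinuousLinearMap.ext fun v => by simp)
      (x := ((r/2 : ℝ) : ℂ)) (y := (0:ℂ)) hmem2 (mem_ball_self hr)
    have : ((r/2 : ℝ) : ℂ) = 0 := hginj hmem2 (mem_ball_self hr) (by rw [hconst])
    simp at this
    linarith
  have hfreq' : ∃ᶠ w in nhds (0:ℂ), deriv g w ≠ 0 := Filter.not_eventually.mp hnz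
  have hev1 : ∀ᶠ w in nhds (0:ℂ), w ∈ ball (0:ℂ) σ := by
    filter_upwards [Metric.ball_mem_nhds (0:ℂ) hσ0] with w hw using hw
  have hgcont0 : ContinuousAt g 0 :=
    (hg.differentiableAt (isOpen_ball.mem_nhds (mem_ball_self hr))).continuousAt
  have hev2 : ∀ᶠ w in nhds (0:ℂ), Complex.abs (g w) < δ := by
    have h1 : ∀ᶠ z in nhds (g 0), Complex.abs z < δ := by
      rw [hg0]
      filter_upwards [Metric.ball_mem_nhds (0:ℂ) hδ0] with z hz
      simpa [mem_ball, dist_zero_right] using hz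
    exact hgcont0.eventually h1
  obtain ⟨w₀, hw₀ne, hw₀σ, hgw₀δ⟩ := (hfreq'.and_eventually (hev1.and hev2)).exists
  have hw₀r : w₀ ∈ ball (0:ℂ) r := ball_subset_ball hσr.le hw₀σ
  -- Step (c): compute the integral for `ζ₀ = g w₀`
  set ζ₀ := g w₀ with hζ₀
  set q := dslope (fun w => g w - ζ₀) w₀ with hq
  have hqd : DifferentiableOn ℂ q (ball (0:ℂ) r) := by
    intro w hw
    rcases eq_or_ne w w₀ with rfl | hne
    · obtain ⟨p, hp⟩ := (hganal w hw).sub (analyticAt_const (v := ζ₀))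
      exact hp.has_fpower_series_dslope_fslope.analyticAt.differentiableAt.differentiableWithinAt
    · exact ((differentiableAt_dslope_of_ne hne).2
        ((hg.differentiableAt (isOpen_ball.mem_nhds hw)).sub_const ζ₀)).differentiableWithinAt
  have hq'd : DifferentiableOn ℂ (deriv q) (ball (0:ℂ) r) :=
    (hqd.analyticOnNhd isOpen_ball).deriv.differentiableOn
  have hfac : ∀ w : ℂ, g w - ζ₀ = (w - w₀) * q w := by
    intro w
    have h := sub_smul_dslope (fun w => g w - ζ₀) w₀ w
    simp only [smul_eq_mul] at h
    have hz : g w₀ - ζ₀ = 0 := by rw [hζ₀, sub_self]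
    rw [hz, sub_zero] at h
    exact h.symm
  have hqne : ∀ w ∈ ball (0:ℂ) r, q w ≠ 0 := by
    intro w hw
    rcases eq_or_ne w w₀ with rfl | hne
    · rw [hq, dslope_same, deriv_sub_const]
      exact hw₀ne
    · intro h0
      have h := hfac w
      rw [h0, mul_zero, sub_eq_zero] at h
      exact hne (hginj hw hw₀r h)
  have hsph : ∀ w ∈ sphere (0:ℂ) σ,
      (g w - ζ₀)⁻¹ * deriv g w = (w - w₀)⁻¹ + deriv q w / q w := by
    intro w hw
    have hwr : w ∈ ball (0:ℂ) r := hsb hw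
    have hwne : w ≠ w₀ := by
      intro h
      rw [mem_sphere_iff_norm, sub_zero, h] at hw
      rw [mem_ball, dist_zero_right] at hw₀σ
      rw [hw] at hw₀σ
      exact lt_irrefl _ hw₀σ
    have hqw := hqne w hwr
    have hq_at : HasDerivAt q (deriv q w) w :=
      (hqd.differentiableAt (isOpen_ball.mem_nhds hwr)).hasDerivAt
    have hprod : HasDerivAt (fun w => (w - w₀) * q w)
        (1 * q w + (w - w₀) * deriv q w) w :=
      ((hasDerivAt_id w).sub_const w₀).mul hq_at
    have hderiv : deriv g w = q w + (w - w₀) * deriv q w := by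
      have hG : HasDerivAt (fun w => g w - ζ₀) (1 * q w + (w - w₀) * deriv q w) w := by
        refine HasDerivAt.congr_of_eventuallyEq hprod ?_
        filter_upwards with u using (hfac u)
      have h2 := hG.deriv
      rw [deriv_sub_const] at h2
      rw [h2]; ring
    rw [hfac w, hderiv]
    field_simp [sub_ne_zero.2 hwne, hqw]
  have hw₀sph : w₀ ∉ sphere (0:ℂ) σ := by
    intro h
    rw [mem_sphere_iff_norm, sub_zero] at h
    rw [mem_ball, dist_zero_right, h] at hw₀σ
    exact lt_irrefl _ hw₀σ
  have hi1 : CircleIntegrable (fun w : ℂ => (w - w₀)⁻¹) 0 σ := by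
    refine (ContinuousOn.inv₀ (by fun_prop) fun w hw => sub_ne_zero.2 ?_).circleIntegrable hσ0.le
    intro h; exact hw₀sph (h ▸ hw)
  have hi2 : CircleIntegrable (fun w : ℂ => deriv q w / q w) 0 σ := by
    refine (ContinuousOn.div (hq'd.continuousOn.mono hsb) (hqd.continuousOn.mono hsb)
      fun w hw => hqne w (hsb hw)).circleIntegrable hσ0.le
  have hmain : (∮ w in C(0, σ), (g w - ζ₀)⁻¹ * deriv g w) = 2*π*I := by
    calc (∮ w in C(0, σ), (g w - ζ₀)⁻¹ * deriv g w)
        = ∮ w in C(0, σ), ((w - w₀)⁻¹ + deriv q w / q w) :=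
          circleIntegral.integral_congr hσ0.le fun w hw => hsph w hw
      _ = (∮ w in C(0, σ), (w - w₀)⁻¹) + ∮ w in C(0, σ), deriv q w / q w :=
          circleIntegral_add' hi1 hi2
      _ = 2*π*I + 0 := by
          rw [circleIntegral.integral_sub_inv_of_mem_ball hw₀σ]
          congr 1
          refine circle_zero hσ0.le hσr (DifferentiableOn.div hq'd hqd hqne)
      _ = 2*π*I := add_zero _
  intro ζ hζ
  rw [logstep ζ hζ, ← logstep ζ₀ hgw₀δ, hmain]

private lemma cont_param {ρ σ : ℝ} (f g : ℂ → ℂ)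
    (hfc : Continuous fun φ : ℝ => f (circleMap 0 ρ φ))
    (hgc : Continuous fun θ : ℝ => g (circleMap 0 σ θ))
    (hne : ∀ θ φ : ℝ, circleMap 0 ρ φ - g (circleMap 0 σ θ) ≠ 0) :
    Continuous fun θ : ℝ => ∮ ζ in C(0, ρ), (ζ - g (circleMap 0 σ θ))⁻¹ * f ζ := by
  simp only [circleIntegral, deriv_circleMap, smul_eq_mul]
  apply intervalIntegral.continuous_parametric_intervalIntegral_of_continuous' (μ := volume) ?_ 0 (2*π)
  exact (((continuous_circleMap 0 ρ).snd'.mul continuous_const).mul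
    ((((continuous_circleMap 0 ρ).snd'.sub hgc.fst').inv₀ fun p => hne p.1 p.2).mul hfc.snd'))

/-- Let `f` be holomorphic on the punctured disc `{0 < |z| < R}` and
let `g` be an injective holomorphic function on `{|w| < r}` with `g(0) = 0` and
image contained in `{|z| < R}`. Then for all `ε ∈ (0,R)` and `ε' ∈ (0,r)`,
`∮_{|z|=ε} f(z) dz = ∮_{|w|=ε'} f(g(w)) g'(w) dw`; in particular the residue of
`f` at `0` equals the residue of `(f∘g)·g'` at `0`. -/
theorem stmt14 {R r : ℝ} (hR : 0 < R) (hr : 0 < r)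
    (f g : ℂ → ℂ)
    (hf : DifferentiableOn ℂ f (ball (0 : ℂ) R \ {0}))
    (hg : DifferentiableOn ℂ g (ball (0 : ℂ) r))
    (hginj : Set.InjOn g (ball (0 : ℂ) r))
    (hg0 : g 0 = 0)
    (hgmaps : Set.MapsTo g (ball (0 : ℂ) r) (ball (0 : ℂ) R)) :
    ∀ ε ∈ Set.Ioo (0 : ℝ) R, ∀ ε' ∈ Set.Ioo (0 : ℝ) r,
      (∮ z in C(0, ε), f z) = ∮ w in C(0, ε'), f (g w) * deriv g w := by
  intro ε hε ε' hε'
  obtain ⟨hε0, hεR⟩ := hε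
  obtain ⟨hσ0, hσr⟩ := hε'
  have hsb : sphere (0:ℂ) ε' ⊆ ball (0:ℂ) r := fun w hw => by
    rw [mem_sphere_iff_norm, sub_zero] at hw
    rw [mem_ball, dist_zero_right, hw]; exact hσr
  have hcb : closedBall (0:ℂ) ε' ⊆ ball (0:ℂ) r := closedBall_subset_ball hσr
  have hganal : AnalyticOnNhd ℂ g (ball (0:ℂ) r) := hg.analyticOnNhd isOpen_ball
  have hg'd : DifferentiableOn ℂ (deriv g) (ball (0:ℂ) r) := hganal.deriv.differentiableOn
  -- minimum of |g| on the sphere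
  obtain ⟨w₁, hw₁s, hw₁min'⟩ := (isCompact_sphere (0:ℂ) ε').exists_isMinOn
    ((NormedSpace.sphere_nonempty (x := (0:ℂ))).2 hσ0.le)
    (Complex.continuous_abs.comp_continuousOn (hg.continuousOn.mono hsb))
  have hw₁min : ∀ w ∈ sphere (0:ℂ) ε', Complex.abs (g w₁) ≤ Complex.abs (g w) :=
    fun w hw => isMinOn_iff.1 hw₁min' w hw
  set δ := Complex.abs (g w₁) with hδdef
  have hw₁ne : w₁ ≠ 0 := by
    intro h
    rw [h, mem_sphere_iff_norm, sub_zero] at hw₁s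
    simp at hw₁s
    linarith
  have hδ0 : 0 < δ := by
    rcases eq_or_lt_of_le (AbsoluteValue.nonneg Complex.abs (g w₁)) with h | h
    · exfalso
      have hg1 : g w₁ = 0 := by
        have h2 : Complex.abs (g w₁) = 0 := h.symm
        exact (AbsoluteValue.eq_zero Complex.abs).1 h2
      exact hw₁ne (hginj (hsb hw₁s) (mem_ball_self hr) (by rw [hg1, hg0]))
    · exact h
  have hδ : ∀ w ∈ sphere (0:ℂ) ε', δ ≤ Complex.abs (g w) := hw₁min
  -- maximum of |g| on the closed ball
  obtain ⟨w₂, hw₂m, hw₂max'⟩ := (isCompact_closedBall (0:ℂ) ε').exists_isMaxOn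
    ⟨0, mem_closedBall_self hσ0.le⟩
    (Complex.continuous_abs.comp_continuousOn (hg.continuousOn.mono hcb))
  have hw₂max : ∀ w ∈ closedBall (0:ℂ) ε', Complex.abs (g w) ≤ Complex.abs (g w₂) :=
    fun w hw => isMaxOn_iff.1 hw₂max' w hw
  set M := Complex.abs (g w₂) with hMdef
  have hMR : M < R := by
    have := hgmaps (hcb hw₂m)
    rwa [mem_ball, dist_zero_right] at this
  have hδM : δ ≤ M := hw₂max w₁ (sphere_subset_closedBall hw₁s)
  set ρ₁ := δ/2 with hρ₁def
  set ρ₂ := (M+R)/2 with hρ₂def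
  have hρ₁0 : 0 < ρ₁ := by positivity
  have hρ₁δ : ρ₁ < δ := by rw [hρ₁def]; linarith
  have hMρ₂ : M < ρ₂ := by rw [hρ₂def]; linarith
  have hρ₂R : ρ₂ < R := by rw [hρ₂def]; linarith
  have hρ₂0 : 0 < ρ₂ := by rw [hρ₂def]; linarith
  have hρ₁ρ₂ : ρ₁ ≤ ρ₂ := by rw [hρ₁def, hρ₂def]; linarith
  have hρ₁R : ρ₁ < R := by rw [hρ₁def]; linarith
  -- winding number lemma
  have Kval := winding hr hσ0 hσr hg hginj hg0 hδ0 hδ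
  -- f is continuous on the two circles
  have hsphsub : ∀ ρ : ℝ, 0 < ρ → ρ < R → sphere (0:ℂ) ρ ⊆ ball (0:ℂ) R \ {0} := by
    intro ρ h0 hR' ζ hζ
    rw [mem_sphere_iff_norm, sub_zero] at hζ
    constructor
    · rw [mem_ball, dist_zero_right, hζ]; exact hR'
    · simp only [mem_singleton_iff]
      intro h; rw [h] at hζ; simp at hζ; linarith
  have hfc2 : ContinuousOn f (sphere (0:ℂ) ρ₂) := hf.continuousOn.mono (hsphsub ρ₂ hρ₂0 hρ₂R)
  have hfc1 : ContinuousOn f (sphere (0:ℂ) ρ₁) := hf.continuousOn.mono (hsphsub ρ₁ hρ₁0 hρ₁R)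
  have hfcc2 : Continuous fun φ : ℝ => f (circleMap 0 ρ₂ φ) :=
    hfc2.comp_continuous (continuous_circleMap 0 ρ₂) fun φ => circleMap_mem_sphere 0 hρ₂0.le φ
  have hfcc1 : Continuous fun φ : ℝ => f (circleMap 0 ρ₁ φ) :=
    hfc1.comp_continuous (continuous_circleMap 0 ρ₁) fun φ => circleMap_mem_sphere 0 hρ₁0.le φ
  have hgcc : Continuous fun θ : ℝ => g (circleMap 0 ε' θ) :=
    (hg.continuousOn.mono hsb).comp_continuous (continuous_circleMap 0 ε')
      fun θ => circleMap_mem_sphere 0 hσ0.le θ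
  have hg'cc : Continuous fun θ : ℝ => deriv g (circleMap 0 ε' θ) :=
    (hg'd.continuousOn.mono hsb).comp_continuous (continuous_circleMap 0 ε')
      fun θ => circleMap_mem_sphere 0 hσ0.le θ
  have hgM : ∀ w ∈ closedBall (0:ℂ) ε', Complex.abs (g w) ≤ M := hw₂max
  -- nonvanishing denominators on the parametrized circles
  have hne2 : ∀ θ φ : ℝ, circleMap 0 ρ₂ φ - g (circleMap 0 ε' θ) ≠ 0 := by
    intro θ φ
    refine sub_ne_zero.2 fun h => ?_
    have h1 : Complex.abs (circleMap 0 ρ₂ φ) = ρ₂ := by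
      rw [abs_circleMap_zero]; exact abs_of_pos hρ₂0
    rw [h] at h1
    have h2 := hgM _ (sphere_subset_closedBall (circleMap_mem_sphere 0 hσ0.le θ))
    rw [h1] at h2
    linarith
  have hne1 : ∀ θ φ : ℝ, circleMap 0 ρ₁ φ - g (circleMap 0 ε' θ) ≠ 0 := by
    intro θ φ
    refine sub_ne_zero.2 fun h => ?_
    have h1 : Complex.abs (circleMap 0 ρ₁ φ) = ρ₁ := by
      rw [abs_circleMap_zero]; exact abs_of_pos hρ₁0
    have h2 := hδ _ (circleMap_mem_sphere 0 hσ0.le θ)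
    rw [h] at h1
    rw [h1] at h2
    linarith
  have hann : ∀ w ∈ sphere (0:ℂ) ε',
      ρ₁ < Complex.abs (g w) ∧ Complex.abs (g w) < ρ₂ := fun w hw =>
    ⟨lt_of_lt_of_le hρ₁δ (hδ w hw),
      lt_of_le_of_lt (hgM w (sphere_subset_closedBall hw)) hMρ₂⟩
  have h2πI : (2*(π:ℝ)*I : ℂ) ≠ 0 := by
    simp [Real.pi_ne_zero, Complex.I_ne_zero]
  -- integrability of the two kernel terms
  have contA : Continuous fun θ : ℝ => ∮ ζ in C(0, ρ₂), (ζ - g (circleMap 0 ε' θ))⁻¹ * f ζ :=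
    cont_param f g hfcc2 hgcc hne2
  have contB : Continuous fun θ : ℝ => ∮ ζ in C(0, ρ₁), (ζ - g (circleMap 0 ε' θ))⁻¹ * f ζ :=
    cont_param f g hfcc1 hgcc hne1
  have iA : CircleIntegrable
      (fun w => (∮ ζ in C(0, ρ₂), (ζ - g w)⁻¹ * f ζ) * deriv g w) 0 ε' :=
    (contA.mul hg'cc).intervalIntegrable 0 (2*π)
  have iB : CircleIntegrable
      (fun w => (∮ ζ in C(0, ρ₁), (ζ - g w)⁻¹ * f ζ) * deriv g w) 0 ε' :=
    (contB.mul hg'cc).intervalIntegrable 0 (2*π)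
  -- pointwise Cauchy formula on the circle ε'
  have hpt : ∀ w ∈ sphere (0:ℂ) ε',
      2*(π:ℝ)*I * (f (g w) * deriv g w)
        = (∮ ζ in C(0, ρ₂), (ζ - g w)⁻¹ * f ζ) * deriv g w
          - (∮ ζ in C(0, ρ₁), (ζ - g w)⁻¹ * f ζ) * deriv g w := by
    intro w hw
    have h := cauchy_annulus hf hρ₁0 hρ₁ρ₂ hρ₂R (hann w hw).1 (hann w hw).2
    linear_combination deriv g w * h
  -- the ρ₂ term vanishes
  have hAzero : (∮ w in C(0, ε'),
      (∮ ζ in C(0, ρ₂), (ζ - g w)⁻¹ * f ζ) * deriv g w) = 0 := by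
    have swap2 := circle_swap (F := fun w z => (z - g w)⁻¹ * f z * deriv g w)
      (ρ := ε') (σ := ρ₂)
      (((((continuous_circleMap 0 ρ₂).snd'.sub hgcc.fst').inv₀
        fun p => hne2 p.1 p.2).mul hfcc2.snd').mul hg'cc.fst')
    calc (∮ w in C(0, ε'), (∮ ζ in C(0, ρ₂), (ζ - g w)⁻¹ * f ζ) * deriv g w)
        = ∮ w in C(0, ε'), ∮ ζ in C(0, ρ₂), (ζ - g w)⁻¹ * f ζ * deriv g w := by
          refine circleIntegral.integral_congr hσ0.le fun w hw => ?_
          have hs := circleIntegral.integral_smul_const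
            (fun ζ => (ζ - g w)⁻¹ * f ζ) (deriv g w) 0 ρ₂
          simp only [smul_eq_mul] at hs
          exact hs.symm
      _ = ∮ ζ in C(0, ρ₂), ∮ w in C(0, ε'), (ζ - g w)⁻¹ * f ζ * deriv g w := swap2
      _ = ∮ _ζ in C(0, ρ₂), (0:ℂ) := by
          refine circleIntegral.integral_congr hρ₂0.le fun ζ hζ => ?_
          rw [mem_sphere_iff_norm, sub_zero] at hζ
          have hζρ : Complex.abs ζ = ρ₂ := hζ
          have hdall : ∀ w ∈ closedBall (0:ℂ) ε',
              DifferentiableAt ℂ (fun w => (ζ - g w)⁻¹ * f ζ * deriv g w) w := by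
            intro w hw
            have hgw : DifferentiableAt ℂ g w :=
              hg.differentiableAt (isOpen_ball.mem_nhds (hcb hw))
            have hgne' : ζ - g w ≠ 0 := sub_ne_zero.2 fun h => by
              have h2 := hgM w hw; rw [← h, hζρ] at h2; linarith
            exact ((((differentiableAt_const ζ).sub hgw).inv hgne').mul_const (f ζ)).mul
              (hg'd.differentiableAt (isOpen_ball.mem_nhds (hcb hw)))
          exact Complex.circleIntegral_eq_zero_of_differentiable_on_off_countable hσ0.le
            countable_empty (fun w hw => (hdall w hw).continuousAt.continuousWithinAt)
            fun w hw => hdall w (ball_subset_closedBall hw.1)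
      _ = 0 := circleIntegral_zero'
  -- the ρ₁ term gives the residue
  have hBval : (∮ w in C(0, ε'),
      (∮ ζ in C(0, ρ₁), (ζ - g w)⁻¹ * f ζ) * deriv g w)
      = (∮ ζ in C(0, ρ₁), f ζ) * (-(2*(π:ℝ)*I)) := by
    have swap1 := circle_swap (F := fun w z => (z - g w)⁻¹ * f z * deriv g w)
      (ρ := ε') (σ := ρ₁)
      (((((continuous_circleMap 0 ρ₁).snd'.sub hgcc.fst').inv₀
        fun p => hne1 p.1 p.2).mul hfcc1.snd').mul hg'cc.fst')
    calc (∮ w in C(0, ε'), (∮ ζ in C(0, ρ₁), (ζ - g w)⁻¹ * f ζ) * deriv g w)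
        = ∮ w in C(0, ε'), ∮ ζ in C(0, ρ₁), (ζ - g w)⁻¹ * f ζ * deriv g w := by
          refine circleIntegral.integral_congr hσ0.le fun w hw => ?_
          have hs := circleIntegral.integral_smul_const
            (fun ζ => (ζ - g w)⁻¹ * f ζ) (deriv g w) 0 ρ₁
          simp only [smul_eq_mul] at hs
          exact hs.symm
      _ = ∮ ζ in C(0, ρ₁), ∮ w in C(0, ε'), (ζ - g w)⁻¹ * f ζ * deriv g w := swap1
      _ = ∮ ζ in C(0, ρ₁), f ζ * (-(2*(π:ℝ)*I)) := by
          refine circleIntegral.integral_congr hρ₁0.le fun ζ hζ => ?_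
          rw [mem_sphere_iff_norm, sub_zero] at hζ
          have hζδ : Complex.abs ζ < δ := by
            have : Complex.abs ζ = ρ₁ := hζ
            rw [this]; exact hρ₁δ
          have hKv := Kval ζ hζδ
          calc (∮ w in C(0, ε'), (ζ - g w)⁻¹ * f ζ * deriv g w)
              = ∮ w in C(0, ε'), f ζ * (-((g w - ζ)⁻¹ * deriv g w)) := by
                refine circleIntegral.integral_congr hσ0.le fun w _ => ?_
                rw [← neg_sub (g w) ζ, inv_neg]; ring
            _ = f ζ * ∮ w in C(0, ε'), -((g w - ζ)⁻¹ * deriv g w) :=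
                circleIntegral.integral_const_mul _ _ _ _
            _ = f ζ * -(∮ w in C(0, ε'), (g w - ζ)⁻¹ * deriv g w) := by
                rw [circleIntegral_neg']
            _ = f ζ * (-(2*(π:ℝ)*I)) := by rw [hKv]
      _ = (∮ ζ in C(0, ρ₁), f ζ) * (-(2*(π:ℝ)*I)) := by
          have hs := circleIntegral.integral_smul_const f (-(2*(π:ℝ)*I)) 0 ρ₁
          simp only [smul_eq_mul] at hs
          exact hs
  -- combine everything
  have hT2 : (∮ w in C(0, ε'), 2*(π:ℝ)*I * (f (g w) * deriv g w))
      = (∮ w in C(0, ε'), (∮ ζ in C(0, ρ₂), (ζ - g w)⁻¹ * f ζ) * deriv g w)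
        - ∮ w in C(0, ε'), (∮ ζ in C(0, ρ₁), (ζ - g w)⁻¹ * f ζ) * deriv g w := by
    calc (∮ w in C(0, ε'), 2*(π:ℝ)*I * (f (g w) * deriv g w))
        = ∮ w in C(0, ε'), ((∮ ζ in C(0, ρ₂), (ζ - g w)⁻¹ * f ζ) * deriv g w
            - (∮ ζ in C(0, ρ₁), (ζ - g w)⁻¹ * f ζ) * deriv g w) :=
          circleIntegral.integral_congr hσ0.le fun w hw => hpt w hw
      _ = _ := circleIntegral.integral_sub iA iB
  have hT : (∮ w in C(0, ε'), 2*(π:ℝ)*I * (f (g w) * deriv g w))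
      = 2*(π:ℝ)*I * ∮ w in C(0, ε'), f (g w) * deriv g w :=
    circleIntegral.integral_const_mul _ _ _ _
  have final : 2*(π:ℝ)*I * (∮ w in C(0, ε'), f (g w) * deriv g w)
      = 2*(π:ℝ)*I * ∮ ζ in C(0, ρ₁), f ζ := by
    rw [← hT, hT2, hAzero, hBval]; ring
  rw [mul_left_cancel₀ h2πI final]
  exact radius_indep hf ⟨hε0, hεR⟩ ⟨hρ₁0, hρ₁R⟩
end
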